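/- arXiv:1310.0208 — 7 statements merged into one kernel-verified Lean document; each statement's English description precedes it below -/
import Mathlib

section
/- Let X be a topological space and G a group acting on X by homeomorphisms, with the action properly discontinuous. Let Φ and Θ be subgroups of G and let R ⊆ X be a subset. Suppose there exist a compact set K' ⊆ X and an injective sequence (φ_k)_{k∈ℕ} of elements of Φ such that (φ_k · K') ∩ R ≠ ∅ for every k, and suppose there exists a compact set K'' ⊆ X such that R ⊆ ⋃_{θ∈Θ} θ · K''. Then Φ ∩ Θ is a nontrivial subgroup of G (it contains a non-identity element). -/
open scoped Pointwise

/-- **Key step of Proposition 2.1 (Susskind's conjecture, abstract form).**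
If a group `G` acts properly discontinuously by homeomorphisms on a topological space `X`,
`Φ` and `Θ` are subgroups of `G`, and `R ⊆ X` is a set meeting infinitely many `Φ`-translates
of a compact set `K'` and covered by the `Θ`-translates of a compact set `K''`, then `Φ ∩ Θ`
contains a non-identity element. -/
theorem nontrivial_intersection_of_conical_and_uniform
    {G X : Type*} [Group G] [TopologicalSpace X] [MulAction G X]
    [ContinuousConstSMul G X]
    (hPD : ∀ K L : Set X, IsCompact K → IsCompact L →
      {g : G | ((g • K) ∩ L).Nonempty}.Finite)
    (Φ Θ : Subgroup G) (R : Set X)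
    (K' : Set X) (hK' : IsCompact K')
    (φ : ℕ → G) (hφinj : Function.Injective φ) (hφmem : ∀ k, φ k ∈ Φ)
    (hφint : ∀ k, ((φ k • K') ∩ R).Nonempty)
    (K'' : Set X) (hK'' : IsCompact K'')
    (hcover : R ⊆ ⋃ θ ∈ Θ, θ • K'') :
    ∃ g : G, g ∈ Φ ⊓ Θ ∧ g ≠ 1 := by
  -- choose for each k a point in the intersection and a θ k covering it
  have hchoice : ∀ k : ℕ, ∃ θ : G, θ ∈ Θ ∧ (((θ⁻¹ * φ k) • K') ∩ K'').Nonempty := by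
    intro k
    obtain ⟨x, hx1, hx2⟩ := hφint k
    obtain ⟨θ, hθΘ, hxθ⟩ := by
      have := hcover hx2
      simpa using this
    refine ⟨θ, hθΘ, ⟨θ⁻¹ • x, ?_, ?_⟩⟩
    · obtain ⟨y, hy, rfl⟩ := hx1
      refine ⟨y, hy, ?_⟩
      simp [mul_smul]
    · obtain ⟨z, hz, rfl⟩ := hxθ
      simpa using hz
  choose θ hθΘ hθint using hchoice
  have hF : {g : G | ((g • K') ∩ K'').Nonempty}.Finite := hPD K' K'' hK' hK''
  -- pigeonhole
  have hmem : ∀ k, (θ k)⁻¹ * φ k ∈ {g : G | ((g • K') ∩ K'').Nonempty} :=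
    fun k => hθint k
  have : ∃ k l : ℕ, k ≠ l ∧ (θ k)⁻¹ * φ k = (θ l)⁻¹ * φ l := by
    have := hF
    let f : ℕ → {g : G | ((g • K') ∩ K'').Nonempty} := fun k => ⟨_, hmem k⟩
    haveI : Finite {g : G | ((g • K') ∩ K'').Nonempty} := hF
    obtain ⟨k, l, hkl, hfeq⟩ := Finite.exists_ne_map_eq_of_infinite f
    exact ⟨k, l, hkl, Subtype.ext_iff.mp hfeq⟩
  obtain ⟨k, l, hkl, heq⟩ := this
  refine ⟨φ k * (φ l)⁻¹, ?_, ?_⟩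
  · refine Subgroup.mem_inf.mpr ⟨Φ.mul_mem (hφmem k) (Φ.inv_mem (hφmem l)), ?_⟩
    have : φ k * (φ l)⁻¹ = θ k * (θ l)⁻¹ := by
      have h : θ k * ((θ k)⁻¹ * φ k) * ((θ l)⁻¹ * φ l)⁻¹ * (θ l)⁻¹
          = θ k * ((θ k)⁻¹ * φ k) * ((θ k)⁻¹ * φ k)⁻¹ * (θ l)⁻¹ := by rw [heq]
      group at h
      simpa [mul_assoc] using h
    rw [this]
    exact Θ.mul_mem (hθΘ k) (Θ.inv_mem (hθΘ l))
  · intro h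
    apply hkl
    apply hφinj
    have := mul_inv_eq_one.mp h
    exact this
end

section
/- Let X be a topological space and G a group acting on X by homeomorphisms, with the action properly discontinuous. Let Φ and Θ be subgroups of G and let R ⊆ X be a subset. Suppose there exist a compact set K' ⊆ X and an injective sequence (φ_k)_{k∈ℕ} of elements of Φ such that (φ_k · K') ∩ R ≠ ∅ for every k, and suppose there exists a compact set K'' ⊆ X such that R ⊆ ⋃_{θ∈Θ} θ · K''. Then there exist a compact set K ⊆ X and an injective sequence (ψ_m)_{m∈ℕ} of elements of the intersection Φ ∩ Θ such that (ψ_m · K) ∩ R ≠ ∅ for every m. -/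
open scoped Pointwise

/-!
Pick `x k ∈ φ k • K' ∩ R` and, by the covering, `θ k ∈ Θ` with `x k ∈ θ k • K''`. Then
`(φ k)⁻¹ * θ k` moves `K''` onto a set meeting `K'`, so by proper discontinuity it takes only
finitely many values, and by pigeonhole it is constant along an infinite set of indices `k`.
For two such indices `k, k₀` we get `φ k * (φ k₀)⁻¹ = θ k * (θ k₀)⁻¹ ∈ Φ ⊓ Θ`, and these elements
carry `φ k₀ • K'` onto `φ k • K'`, which meets `R`.
-/

open Function Set

theorem Set.Finite.exists_injective_forall_comp_eq {α : Type*} {F : Set α} (hF : F.Finite)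
    {f : ℕ → α} (hf : ∀ k, f k ∈ F) : ∃ a, ∃ e : ℕ → ℕ, Injective e ∧ ∀ m, f (e m) = a := by
  have := hF.to_subtype
  obtain ⟨a, ha⟩ := Finite.exists_infinite_fiber fun k ↦ (⟨f k, hf k⟩ : F)
  let e := (Set.infinite_coe_iff.1 ha).natEmbedding
  exact ⟨a, fun m ↦ (e m : ℕ), Subtype.val_injective.comp e.injective,
    fun m ↦ congrArg Subtype.val (e m).2⟩

theorem mul_inv_eq_mul_inv_of_inv_mul_eq_inv_mul {G : Type*} [Group G] {a b c d : G}
    (h : a⁻¹ * b = c⁻¹ * d) : a * c⁻¹ = b * d⁻¹ := by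
  rw [eq_mul_inv_iff_mul_eq, mul_assoc, ← h, mul_inv_cancel_left]

theorem inv_mul_smul_inter_nonempty_of_mem_smul {G X : Type*} [Group G] [MulAction G X]
    {a b : G} {A B : Set X} {x : X} (ha : x ∈ a • A) (hb : x ∈ b • B) :
    ((a⁻¹ * b) • B ∩ A).Nonempty :=
  ⟨a⁻¹ • x, by rw [mul_smul]; exact smul_mem_smul_set hb, mem_smul_set_iff_inv_smul_mem.1 ha⟩

theorem Subgroup.exists_injective_mul_inv_mem_inf_of_inv_mul_mem_finite {G : Type*} [Group G]
    {Φ Θ : Subgroup G} {φ θ : ℕ → G} (hφ : ∀ k, φ k ∈ Φ) (hθ : ∀ k, θ k ∈ Θ) {F : Set G}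
    (hF : F.Finite) (hmem : ∀ k, (φ k)⁻¹ * θ k ∈ F) :
    ∃ k₀, ∃ e : ℕ → ℕ, Injective e ∧ ∀ m, φ (e m) * (φ k₀)⁻¹ ∈ Φ ⊓ Θ := by
  obtain ⟨g, e, he, heg⟩ := hF.exists_injective_forall_comp_eq hmem
  refine ⟨e 0, e, he, fun m ↦ ⟨Φ.mul_mem (hφ _) (Φ.inv_mem (hφ _)), ?_⟩⟩
  rw [SetLike.mem_coe, mul_inv_eq_mul_inv_of_inv_mul_eq_inv_mul ((heg m).trans (heg 0).symm)]
  exact Θ.mul_mem (hθ _) (Θ.inv_mem (hθ _))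

/-- **Abstract core of Proposition 2.1.**
If a group `G` acts properly discontinuously by homeomorphisms on a topological space `X`,
`Φ` and `Θ` are subgroups of `G`, and `R ⊆ X` is a set meeting infinitely many `Φ`-translates
of a compact set `K'` and covered by the `Θ`-translates of a compact set `K''`, then `R` meets
infinitely many `(Φ ∩ Θ)`-translates of some compact set. -/
theorem conical_of_conical_and_uniform
    {G X : Type*} [Group G] [TopologicalSpace X] [MulAction G X]
    [ContinuousConstSMul G X]
    (hPD : ∀ K L : Set X, IsCompact K → IsCompact L →
      {g : G | ((g • K) ∩ L).Nonempty}.Finite)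
    (Φ Θ : Subgroup G) (R : Set X)
    (K' : Set X) (hK' : IsCompact K')
    (φ : ℕ → G) (hφinj : Function.Injective φ) (hφmem : ∀ k, φ k ∈ Φ)
    (hφint : ∀ k, ((φ k • K') ∩ R).Nonempty)
    (K'' : Set X) (hK'' : IsCompact K'')
    (hcover : R ⊆ ⋃ θ ∈ Θ, θ • K'') :
    ∃ K : Set X, IsCompact K ∧ ∃ ψ : ℕ → G, Function.Injective ψ ∧
      (∀ m, ψ m ∈ Φ ⊓ Θ) ∧ ∀ m, ((ψ m • K) ∩ R).Nonempty := by
  choose x hx using hφint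
  choose θ hθ hxθ using fun k ↦ mem_iUnion₂.1 (hcover (hx k).2)
  obtain ⟨k₀, e, he, hψ⟩ :=
    Subgroup.exists_injective_mul_inv_mem_inf_of_inv_mul_mem_finite hφmem hθ
      (hPD K'' K' hK'' hK') fun k ↦ inv_mul_smul_inter_nonempty_of_mem_smul (hx k).1 (hxθ k)
  refine ⟨φ k₀ • K', hK'.smul _, fun m ↦ φ (e m) * (φ k₀)⁻¹,
    (mul_left_injective _).comp (hφinj.comp he), hψ, fun m ↦ ?_⟩
  rw [smul_smul, inv_mul_cancel_right]
  exact ⟨x (e m), hx (e m)⟩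
end

section
/- Let X be a topological space and G a group acting on X by homeomorphisms, with the action properly discontinuous. Let Φ be a subgroup of G, let γ ∈ G, and let R ⊆ X be a subset. Suppose there exist a compact set K' ⊆ X and an injective sequence (φ_k)_{k∈ℕ} of elements of Φ such that (φ_k · K') ∩ R ≠ ∅ for every k, and suppose there exists a compact set K'' ⊆ X such that R ⊆ ⋃_{n∈ℤ} γ^n · K''. Then there exists an integer m ≥ 1 with γ^m ∈ Φ. -/
open scoped Pointwise

/-- **Abstract form of Corollary 2.3.**
If a group `G` acts properly discontinuously by homeomorphisms on a topological space `X`,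
`Φ` is a subgroup of `G`, `γ ∈ G`, and `R ⊆ X` is a set meeting infinitely many `Φ`-translates
of a compact set `K'` and covered by the translates of a compact set `K''` by the powers of
`γ`, then some positive power of `γ` lies in `Φ`. -/
theorem pow_mem_of_conical
    {G X : Type*} [Group G] [TopologicalSpace X] [MulAction G X]
    [ContinuousConstSMul G X]
    (hPD : ∀ K L : Set X, IsCompact K → IsCompact L →
      {g : G | ((g • K) ∩ L).Nonempty}.Finite)
    (Φ : Subgroup G) (γ : G) (R : Set X)
    (K' : Set X) (hK' : IsCompact K')
    (φ : ℕ → G) (hφinj : Function.Injective φ) (hφmem : ∀ k, φ k ∈ Φ)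
    (hφint : ∀ k, ((φ k • K') ∩ R).Nonempty)
    (K'' : Set X) (hK'' : IsCompact K'')
    (hcover : R ⊆ ⋃ n : ℤ, γ ^ n • K'') :
    ∃ m : ℕ, 1 ≤ m ∧ γ ^ m ∈ Φ := by
  -- for each k, choose n k with (γ^(-n k) * φ k) • K' meeting K''
  have hchoice : ∀ k : ℕ, ∃ n : ℤ, ((((γ ^ n)⁻¹ * φ k) • K') ∩ K'').Nonempty := by
    intro k
    obtain ⟨x, hx1, hx2⟩ := hφint k
    obtain ⟨_, ⟨n, rfl⟩, hxn⟩ := hcover hx2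
    refine ⟨n, (γ ^ n)⁻¹ • x, ?_, ?_⟩
    · rw [mul_smul]
      exact Set.smul_mem_smul_set hx1
    · obtain ⟨y, hy, rfl⟩ := hxn
      simpa using hy
  choose n hn using hchoice
  have hfin := hPD K' K'' hK' hK''
  have hmap : ∀ k, ((γ ^ n k)⁻¹ * φ k) ∈ {g : G | ((g • K') ∩ K'').Nonempty} :=
    fun k => hn k
  -- the map k ↦ (γ^(n k))⁻¹ * φ k lands in a finite set, hence is not injective
  have hnotinj : ¬ Function.Injective (fun k => (γ ^ n k)⁻¹ * φ k) := by
    intro hinj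
    exact Set.infinite_of_injective_forall_mem hinj hmap hfin
  rw [Function.not_injective_iff] at hnotinj
  obtain ⟨k, l, heq, hkl⟩ := hnotinj
  have hne : n k ≠ n l := by
    intro h
    apply hkl
    apply hφinj
    have := heq
    rw [h] at this
    exact mul_left_cancel this
  have hmem : γ ^ (n k - n l) ∈ Φ := by
    have : γ ^ (n k - n l) = φ k * (φ l)⁻¹ := by
      have h2 : φ k = γ ^ n k * ((γ ^ n l)⁻¹ * φ l) := by
        rw [← heq]; group
      rw [h2]; group
    rw [this]
    exact Φ.mul_mem (hφmem k) (Φ.inv_mem (hφmem l))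
  set d : ℤ := n k - n l with hd
  have hdne : d ≠ 0 := sub_ne_zero.mpr hne
  refine ⟨d.natAbs, Nat.one_le_iff_ne_zero.mpr (Int.natAbs_ne_zero.mpr hdne), ?_⟩
  have : γ ^ (d.natAbs : ℤ) ∈ Φ := by
    rcases Int.natAbs_eq d with h | h
    · rw [← h]; exact hmem
    · rw [eq_comm, neg_eq_iff_eq_neg] at h
      rw [h, zpow_neg]
      exact Φ.inv_mem hmem
  rwa [zpow_natCast] at this
end

section
/- Let G be a group satisfying: (i) G is torsion-free (no non-identity element has finite order), and (ii) any two commuting non-identity elements of G are integer powers of a common element, i.e. for all a, b ∈ G with a ≠ 1, b ≠ 1 and a·b = b·a there exist c ∈ G and integers m, n with a = c^m and b = c^n. Then for any two nontrivial normal subgroups Φ and Θ of G, the intersection Φ ∩ Θ is nontrivial (contains a non-identity element). -/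
/-- A monoid is torsion-free if no non-identity element has finite order
(the definition `Monoid.IsTorsionFree` of Mathlib as of December 2024). -/
def Monoid.IsTorsionFree (G : Type*) [Monoid G] : Prop :=
  ∀ g : G, g ≠ 1 → ¬IsOfFinOrder g

/-! Take `a ∈ Φ` and `b ∈ Θ` nontrivial. If they do not commute, their commutator is a
nontrivial element of `Φ ⊓ Θ`, since both subgroups are normal. If they commute, they are powers
`c ^ m`, `c ^ n` of a common element, so `a ^ n = b ^ m` lies in `Φ ⊓ Θ`, and it is nontrivial
because `G` is torsion-free. -/

open scoped commutatorElement

section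

variable {G : Type*} [Group G]

theorem Monoid.IsTorsionFree.zpow_ne_one (htf : Monoid.IsTorsionFree G) {a : G} (ha : a ≠ 1)
    {n : ℤ} (hn : n ≠ 0) : a ^ n ≠ 1 :=
  fun h => htf a ha (isOfFinOrder_iff_zpow_eq_one.mpr ⟨n, hn, h⟩)

theorem Monoid.IsTorsionFree.exists_mem_zpowers_inf_ne_one (htf : Monoid.IsTorsionFree G)
    {a b c : G} {m n : ℤ} (ha : a ≠ 1) (hb : b ≠ 1) (ham : a = c ^ m) (hbn : b = c ^ n) :
    ∃ g ∈ Subgroup.zpowers a ⊓ Subgroup.zpowers b, g ≠ 1 := by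
  have hn : n ≠ 0 := by
    rintro rfl
    exact hb (by rw [hbn, zpow_zero])
  have hpow : a ^ n = b ^ m := by
    rw [ham, hbn, ← zpow_mul, ← zpow_mul, mul_comm]
  exact ⟨a ^ n, ⟨⟨n, rfl⟩, ⟨m, hpow.symm⟩⟩, htf.zpow_ne_one ha hn⟩

end

/-- **Group-theoretic core of Lemma 2.2.**
Let `G` be a torsion-free group in which any two commuting non-identity elements are integer
powers of a common element. Then any two nontrivial normal subgroups of `G` intersect
nontrivially. -/
theorem normal_inter_nontrivial
    {G : Type*} [Group G]
    (htf : Monoid.IsTorsionFree G)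
    (hcomm : ∀ a b : G, a ≠ 1 → b ≠ 1 → a * b = b * a →
      ∃ c : G, ∃ m n : ℤ, a = c ^ m ∧ b = c ^ n)
    (Φ Θ : Subgroup G) (hΦn : Φ.Normal) (hΘn : Θ.Normal)
    (hΦ : Φ ≠ ⊥) (hΘ : Θ ≠ ⊥) :
    ∃ g : G, g ∈ Φ ⊓ Θ ∧ g ≠ 1 := by
  obtain ⟨a, haΦ, ha⟩ := Φ.bot_or_exists_ne_one.resolve_left hΦ
  obtain ⟨b, hbΘ, hb⟩ := Θ.bot_or_exists_ne_one.resolve_left hΘ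
  by_cases hab : a * b = b * a
  · obtain ⟨c, m, n, ham, hbn⟩ := hcomm a b ha hb hab
    obtain ⟨g, hg, hg1⟩ := htf.exists_mem_zpowers_inf_ne_one ha hb ham hbn
    obtain ⟨hga, hgb⟩ := Subgroup.mem_inf.mp hg
    exact ⟨g, ⟨Subgroup.zpowers_le.mpr haΦ hga, Subgroup.zpowers_le.mpr hbΘ hgb⟩, hg1⟩
  · exact ⟨⁅a, b⁆, Subgroup.commutator_le_inf Φ Θ (Subgroup.commutator_mem_commutator haΦ hbΘ),
      mt commutatorElement_eq_one_iff_mul_comm.mp hab⟩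
end

section
/- Let Γ be a non-elementary discrete purely hyperbolic subgroup of SL(2,ℝ) and let Φ and Θ be nontrivial normal subgroups of Γ. Then Φ ∩ Θ is nontrivial, and Λ(Φ ∩ Θ) = Λ(Φ) ∩ Λ(Θ). -/
open scoped MatrixGroups LinearAlgebra.Projectivization UpperHalfPlane Pointwise
open Matrix

noncomputable section

/-- The topology on `SL(2, ℝ)` as a subspace of the space of `2 × 2` real matrices. -/
instance : TopologicalSpace SL(2, ℝ) :=
  inferInstanceAs (TopologicalSpace { A : Matrix (Fin 2) (Fin 2) ℝ // A.det = 1 })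

/-- The real projective line. -/
abbrev RP1 : Type := ℙ ℝ (Fin 2 → ℝ)

instance : TopologicalSpace RP1 :=
  inferInstanceAs (TopologicalSpace (Quotient (projectivizationSetoid ℝ (Fin 2 → ℝ))))

/-- The action of `SL(2, ℝ)` on the real projective line, via its linear action on `ℝ²`. -/
def sl2Act (g : SL(2, ℝ)) (p : RP1) : RP1 :=
  Projectivization.map (Matrix.SpecialLinearGroup.toLin' g).toLinearMap
    (Matrix.SpecialLinearGroup.toLin' g).injective p

/-- The point `[x : 1]` of the real projective line. -/
def projPt (x : ℝ) : RP1 :=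
  Projectivization.mk ℝ ![x, 1] (by
    intro h
    have := congrFun h 1
    simp at this)

/-- The point `∞ = [1 : 0]` of the real projective line. -/
def projInf : RP1 :=
  Projectivization.mk ℝ ![1, 0] (by
    intro h
    have := congrFun h 0
    simp at this)

/-- The ray in the upper half-plane associated to a point of `ℝP¹`:
`ray [x:1] = {x + i t : 0 < t ≤ 1}` and `ray ∞ = {i t : t ≥ 1}`. -/
def ray (p : RP1) : Set ℍ :=
  if p.rep 1 = 0 then {z : ℍ | z.re = 0 ∧ 1 ≤ z.im}
  else {z : ℍ | z.re = p.rep 0 / p.rep 1 ∧ z.im ≤ 1}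

/-- An element of `SL(2, ℝ)` is hyperbolic if the absolute value of its trace exceeds `2`. -/
def IsHyperbolic (g : SL(2, ℝ)) : Prop :=
  2 < |Matrix.trace (g : Matrix (Fin 2) (Fin 2) ℝ)|

/-- A subgroup of `SL(2, ℝ)` is purely hyperbolic if all of its non-identity elements
are hyperbolic. -/
def PurelyHyperbolic (Γ : Subgroup SL(2, ℝ)) : Prop :=
  ∀ g ∈ Γ, g ≠ 1 → IsHyperbolic g

/-- A subgroup of `SL(2, ℝ)` is non-elementary if it is not virtually abelian, i.e. it has
no abelian subgroup of finite index. -/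
def IsNonElementary (Γ : Subgroup SL(2, ℝ)) : Prop :=
  ¬ ∃ H : Subgroup Γ, H.FiniteIndex ∧ ∀ a ∈ H, ∀ b ∈ H, a * b = b * a

/-- `p ∈ ℝP¹` is a conical limit point of `Γ'` if some compact subset of `ℍ` has infinitely
many `Γ'`-translates meeting the ray ending at `p`. -/
def IsConicalLimitPoint (Γ' : Subgroup SL(2, ℝ)) (p : RP1) : Prop :=
  ∃ K : Set ℍ, IsCompact K ∧ ∃ γ : ℕ → SL(2, ℝ), Function.Injective γ ∧
    (∀ k, γ k ∈ Γ') ∧ ∀ k, (γ k • K ∩ ray p).Nonempty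

/-- `p ∈ ℝP¹` is a uniform conical limit point of `Γ'` if the ray ending at `p` is covered by
the translates of a single compact subset of `ℍ` by an injective sequence in `Γ'`. -/
def IsUniformConicalLimitPoint (Γ' : Subgroup SL(2, ℝ)) (p : RP1) : Prop :=
  ∃ K : Set ℍ, IsCompact K ∧ ∃ γ : ℕ → SL(2, ℝ), Function.Injective γ ∧
    (∀ k, γ k ∈ Γ') ∧ ray p ⊆ ⋃ k, γ k • K

/-- The limit set of a subgroup of `SL(2, ℝ)`: the closure in `ℝP¹` of the set of fixed
points of hyperbolic elements of the subgroup. -/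
def limitSet (Γ' : Subgroup SL(2, ℝ)) : Set RP1 :=
  closure {p : RP1 | ∃ g ∈ Γ', IsHyperbolic g ∧ sl2Act g p = p}

/-!
A hyperbolic `g` has exactly two fixed points on `ℝP¹`, its eigenlines, and `g ^ k` pushes every
point other than the repelling one towards the attracting one. If `N ≠ 1` is normal in `Γ` and `p`
is fixed by a hyperbolic `g ∈ Γ`, let `g` or `g⁻¹` attract towards `p`, and let `x` be a fixed point
of some `n ∈ N \ {1}` other than the repelling point; then `g ^ k n g⁻ᵏ ∈ N` fixes `g ^ k x → p`.
Hence `Λ(N) = Λ(Γ)`, which gives the equality of limit sets once `Φ ∩ Θ ≠ 1`.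
If `Φ ∩ Θ = 1`, then `Φ` and `Θ` commute, so `Θ` fixes both fixed points `p, q` of some
`φ ∈ Φ \ {1}`; normality of `Θ` then forces `Γ` to permute `{p, q}`, and the stabiliser of `p`
in `Γ` is an abelian subgroup of index at most two.
-/

open Filter Topology Projectivization

section LinearAlgebra

variable {K : Type*} [Field K] {v w : Fin 2 → K} {hv : v ≠ 0} {hw : w ≠ 0}

lemma linearIndependent_of_mk_ne (h : mk K v hv ≠ mk K w hw) : LinearIndependent K ![v, w] :=
  (independent_mk_iff_LinearIndependent hv hw).1 ((independent_pair_iff_ne _ _).2 h)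

lemma exists_eq_smul_add_smul_of_mk_ne (h : mk K v hv ≠ mk K w hw) (u : Fin 2 → K) :
    ∃ a b : K, a • v + b • w = u := by
  have hspan := (linearIndependent_of_mk_ne h).span_eq_top_of_card_eq_finrank (by simp)
  rw [Matrix.range_cons, Matrix.range_cons, Matrix.range_empty, Set.union_empty,
    Set.singleton_union] at hspan
  exact Submodule.mem_span_pair.1 (hspan ▸ Submodule.mem_top)

lemma Matrix.eq_of_mulVec_eq_of_mk_ne (h : mk K v hv ≠ mk K w hw)
    {A B : Matrix (Fin 2) (Fin 2) K} (hAv : A *ᵥ v = B *ᵥ v) (hAw : A *ᵥ w = B *ᵥ w) : A = B := by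
  let b := basisOfLinearIndependentOfCardEqFinrank (linearIndependent_of_mk_ne h) (by simp)
  refine Matrix.toLin'.injective (b.ext fun i => ?_)
  fin_cases i <;> simp only [b, coe_basisOfLinearIndependentOfCardEqFinrank, Matrix.toLin'_apply]
  exacts [hAv, hAw]

end LinearAlgebra

section Eigenvectors

variable {G K V : Type*} [Group G] [Field K] [AddCommGroup V] [Module K V]
  [DistribMulAction G V] [SMulCommClass G K V] {g : G}

lemma smul_mk_eq_self_iff {v : V} (hv : v ≠ 0) :
    g • mk K v hv = mk K v hv ↔ ∃ c : K, g • v = c • v := by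
  rw [smul_mk, mk_eq_mk_iff']
  exact exists_congr fun c => eq_comm

lemma pow_smul_eq_of_smul_eq {v : V} {c : K} (h : g • v = c • v) (k : ℕ) :
    g ^ k • v = c ^ k • v := by
  induction k with
  | zero => simp
  | succ k ih => rw [pow_succ, mul_smul, h, smul_comm, ih, smul_smul, pow_succ']

lemma inv_smul_eq_of_smul_eq {v : V} {c : K} (h : g • v = c • v) (hc : c ≠ 0) :
    g⁻¹ • v = c⁻¹ • v := by
  rw [inv_smul_eq_iff, smul_comm, h, inv_smul_smul₀ hc]

lemma mk_ne_mk_of_smul_eq {v w : V} (hv : v ≠ 0) (hw : w ≠ 0) {a b : K}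
    (hgv : g • v = a • v) (hgw : g • w = b • w) (hab : a ≠ b) : mk K v hv ≠ mk K w hw := by
  rw [Ne, mk_eq_mk_iff']
  rintro ⟨c, rfl⟩
  rw [smul_comm, hgw, smul_smul, smul_smul, mul_comm] at hgv
  exact hab (mul_right_cancel₀ (left_ne_zero_of_smul hv) (smul_left_injective K hw hgv)).symm

end Eigenvectors

section SL2

variable {K : Type*} [Field K] (g : SL(2, K))

lemma eq_or_eq_of_quadratic {t a b c : K} (hab : a ≠ b) (ha : a ^ 2 - t * a + 1 = 0)
    (hb : b ^ 2 - t * b + 1 = 0) (hc : c ^ 2 - t * c + 1 = 0) : c = a ∨ c = b := by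
  have ht : t = a + b := by
    refine mul_left_cancel₀ (sub_ne_zero.2 hab) ?_
    linear_combination hb - ha
  subst ht
  have : (c - a) * (c - b) = 0 := by linear_combination hc - ha
  rcases mul_eq_zero.1 this with h | h
  · exact Or.inl (sub_eq_zero.1 h)
  · exact Or.inr (sub_eq_zero.1 h)

lemma det_sub_smul_one (c : K) :
    ((g : Matrix (Fin 2) (Fin 2) K) - c • 1).det
      = c ^ 2 - (g : Matrix (Fin 2) (Fin 2) K).trace * c + 1 := by
  have hdet := g.det_coe
  rw [Matrix.det_fin_two] at hdet
  rw [Matrix.det_fin_two, Matrix.trace_fin_two]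
  simp only [Matrix.sub_apply, Matrix.smul_apply, Matrix.one_apply_eq, smul_eq_mul,
    Matrix.one_apply_ne zero_ne_one, Matrix.one_apply_ne one_ne_zero]
  linear_combination hdet

lemma exists_eigenvector_iff (c : K) : (∃ v : Fin 2 → K, v ≠ 0 ∧ g • v = c • v) ↔
    c ^ 2 - (g : Matrix (Fin 2) (Fin 2) K).trace * c + 1 = 0 := by
  rw [← det_sub_smul_one, ← Matrix.exists_mulVec_eq_zero_iff]
  simp only [Matrix.sub_mulVec, Matrix.smul_mulVec, Matrix.one_mulVec, sub_eq_zero]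
  rfl

end SL2

lemma exists_one_lt_abs_root_of_two_lt_abs {t : ℝ} (ht : 2 < |t|) :
    ∃ l : ℝ, 1 < |l| ∧ l ^ 2 - t * l + 1 = 0 := by
  have key : ∀ t : ℝ, 2 < t → ∃ l : ℝ, 1 < l ∧ l ^ 2 - t * l + 1 = 0 := fun t ht => by
    have hs := Real.sq_sqrt (by nlinarith : (0 : ℝ) ≤ t ^ 2 - 4)
    refine ⟨(t + √(t ^ 2 - 4)) / 2, by linarith [Real.sqrt_nonneg (t ^ 2 - 4)], ?_⟩
    linear_combination hs / 4
  rcases lt_abs.1 ht with ht | ht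
  · obtain ⟨l, hl, hroot⟩ := key t ht
    exact ⟨l, by rwa [abs_of_pos (by linarith)], hroot⟩
  · obtain ⟨l, hl, hroot⟩ := key (-t) ht
    exact ⟨-l, by rwa [abs_neg, abs_of_pos (by linarith)], by linear_combination hroot⟩

lemma tendsto_mk {α : Type*} {f : Filter α} {u : α → Fin 2 → ℝ} (hu : ∀ k, u k ≠ 0)
    {w : Fin 2 → ℝ} (hw : w ≠ 0) (h : Tendsto u f (𝓝 w)) :
    Tendsto (fun k => mk ℝ (u k) (hu k)) f (𝓝 (mk ℝ w hw)) :=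
  (continuous_quotient_mk'.tendsto (⟨w, hw⟩ : {v : Fin 2 → ℝ // v ≠ 0})).comp
    (tendsto_subtype_rng.2 h)

lemma tendsto_pow_smul_of_smul_eq {g : SL(2, ℝ)} {v₁ v₂ : Fin 2 → ℝ} (hv₁ : v₁ ≠ 0)
    (hv₂ : v₂ ≠ 0) {l m : ℝ} (h₁ : g • v₁ = l • v₁) (h₂ : g • v₂ = m • v₂) (hlm : |m| < |l|)
    {x : RP1} (hx : x ≠ mk ℝ v₂ hv₂) :
    Tendsto (fun k : ℕ => g ^ k • x) atTop (𝓝 (mk ℝ v₁ hv₁)) := by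
  induction x using Projectivization.ind with | h u hu => ?_
  have hl : l ≠ 0 := abs_pos.1 ((abs_nonneg m).trans_lt hlm)
  obtain ⟨a, b, rfl⟩ := exists_eq_smul_add_smul_of_mk_ne
    (mk_ne_mk_of_smul_eq hv₁ hv₂ h₁ h₂ fun h => hlm.ne (by rw [h])) u
  have ha : a ≠ 0 := by
    rintro rfl
    exact hx ((mk_eq_mk_iff' ..).2 ⟨b, by rw [zero_smul, zero_add]⟩)
  -- rescaling by `a * l ^ k` leaves `v₁ + (b / a) (m / l) ^ k v₂`
  let w : ℕ → Fin 2 → ℝ := fun k => v₁ + (b / a * (m / l) ^ k) • v₂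
  have hgw : ∀ k, g ^ k • (a • v₁ + b • v₂) = (a * l ^ k) • w k := fun k => by
    rw [smul_add, smul_comm _ a, smul_comm _ b, pow_smul_eq_of_smul_eq h₁,
      pow_smul_eq_of_smul_eq h₂]
    ext i
    simp only [w, Pi.add_apply, Pi.smul_apply, smul_eq_mul, div_pow]
    field_simp
  have hw : ∀ k, w k ≠ 0 := fun k h0 => hu <| (smul_eq_zero_iff_eq (g ^ k)).1 <| by
    rw [hgw, h0, smul_zero]
  have hlim : Tendsto w atTop (𝓝 (v₁ + (b / a * 0) • v₂)) :=
    tendsto_const_nhds.add <| (tendsto_const_nhds.mul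
      (tendsto_pow_atTop_nhds_zero_of_abs_lt_one (by
        rwa [abs_div, div_lt_one (abs_pos.2 hl)]))).smul_const v₂
  rw [mul_zero, zero_smul, add_zero] at hlim
  convert tendsto_mk hw hv₁ hlim using 2 with k
  rw [smul_mk, mk_eq_mk_iff']
  exact ⟨a * l ^ k, (hgw k).symm⟩

namespace IsHyperbolic

variable {g : SL(2, ℝ)} (hg : IsHyperbolic g)
include hg

lemma mk_eq_mk_of_smul_eq {v w : Fin 2 → ℝ} (hv : v ≠ 0) (hw : w ≠ 0) {c : ℝ}
    (hgv : g • v = c • v) (hgw : g • w = c • w) : mk ℝ v hv = mk ℝ w hw := by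
  by_contra hvw
  have hscalar : (g : Matrix (Fin 2) (Fin 2) ℝ) = c • 1 :=
    Matrix.eq_of_mulVec_eq_of_mk_ne hvw
      (by rw [Matrix.smul_mulVec, Matrix.one_mulVec]; exact hgv)
      (by rw [Matrix.smul_mulVec, Matrix.one_mulVec]; exact hgw)
  have hdet : c ^ 2 = 1 := by simpa [hscalar, Matrix.det_smul] using g.det_coe
  have htrace : (g : Matrix (Fin 2) (Fin 2) ℝ).trace = 2 * c := by
    simp [hscalar, Matrix.trace_smul, mul_comm]
  have habs : 2 < 2 * |c| := by simpa [_root_.IsHyperbolic, htrace, abs_mul] using hg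
  nlinarith [sq_abs c, abs_nonneg c]

lemma exists_eigenvectors : ∃ l : ℝ, |l⁻¹| < |l| ∧ ∃ v₁ v₂ : Fin 2 → ℝ,
    v₁ ≠ 0 ∧ v₂ ≠ 0 ∧ g • v₁ = l • v₁ ∧ g • v₂ = l⁻¹ • v₂ := by
  obtain ⟨l, hl, hroot⟩ := exists_one_lt_abs_root_of_two_lt_abs hg
  have hl0 : l ≠ 0 := abs_pos.1 (one_pos.trans hl)
  have hroot' : l⁻¹ ^ 2 - (g : Matrix (Fin 2) (Fin 2) ℝ).trace * l⁻¹ + 1 = 0 := by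
    field_simp
    linear_combination hroot
  obtain ⟨v₁, hv₁, h₁⟩ := (exists_eigenvector_iff g l).2 hroot
  obtain ⟨v₂, hv₂, h₂⟩ := (exists_eigenvector_iff g l⁻¹).2 hroot'
  refine ⟨l, ?_, v₁, v₂, hv₁, hv₂, h₁, h₂⟩
  rw [abs_inv]
  exact (inv_lt_one_of_one_lt₀ hl).trans hl

lemma exists_fixed_pair : ∃ p q : RP1, p ≠ q ∧ g • p = p ∧ g • q = q := by
  obtain ⟨l, hl, v₁, v₂, hv₁, hv₂, h₁, h₂⟩ := hg.exists_eigenvectors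
  exact ⟨mk ℝ v₁ hv₁, mk ℝ v₂ hv₂,
    mk_ne_mk_of_smul_eq hv₁ hv₂ h₁ h₂ fun h => hl.ne (congrArg abs h.symm),
    (smul_mk_eq_self_iff hv₁).2 ⟨l, h₁⟩, (smul_mk_eq_self_iff hv₂).2 ⟨l⁻¹, h₂⟩⟩

lemma eq_or_eq_of_smul_eq {p q x : RP1} (hpq : p ≠ q) (hp : g • p = p) (hq : g • q = q)
    (hx : g • x = x) : x = p ∨ x = q := by
  induction p using Projectivization.ind with | h v hv => ?_
  induction q using Projectivization.ind with | h w hw => ?_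
  induction x using Projectivization.ind with | h u hu => ?_
  obtain ⟨a, ha⟩ := (smul_mk_eq_self_iff hv).1 hp
  obtain ⟨b, hb⟩ := (smul_mk_eq_self_iff hw).1 hq
  obtain ⟨c, hc⟩ := (smul_mk_eq_self_iff hu).1 hx
  have hab : a ≠ b := by
    rintro rfl
    exact hpq (hg.mk_eq_mk_of_smul_eq hv hw ha hb)
  have hroot {y : Fin 2 → ℝ} (hy : y ≠ 0) {e : ℝ} (he : g • y = e • y) :=
    (exists_eigenvector_iff g e).1 ⟨y, hy, he⟩
  rcases eq_or_eq_of_quadratic hab (hroot hv ha) (hroot hw hb) (hroot hu hc) with rfl | rfl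
  · exact Or.inl (hg.mk_eq_mk_of_smul_eq hu hv hc ha)
  · exact Or.inr (hg.mk_eq_mk_of_smul_eq hu hw hc hb)

lemma smul_eq_of_commute {h : SL(2, ℝ)} (hgh : Commute g h) {p : RP1} (hp : g • p = p) :
    h • p = p := by
  induction p using Projectivization.ind with | h v hv => ?_
  obtain ⟨c, hc⟩ := (smul_mk_eq_self_iff hv).1 hp
  have hchv : g • h • v = c • h • v := by rw [← mul_smul, hgh.eq, mul_smul, hc, smul_comm]
  rw [smul_mk]
  exact hg.mk_eq_mk_of_smul_eq _ hv hchv hc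

lemma exists_attracting {p : RP1} (hp : g • p = p) :
    ∃ h, (h = g ∨ h = g⁻¹) ∧ ∃ q : RP1, ∀ x, x ≠ q →
      Tendsto (fun k : ℕ => h ^ k • x) atTop (𝓝 p) := by
  obtain ⟨l, hl, v₁, v₂, hv₁, hv₂, h₁, h₂⟩ := hg.exists_eigenvectors
  have hl0 : l ≠ 0 := abs_pos.1 ((abs_nonneg _).trans_lt hl)
  have h12 : mk ℝ v₁ hv₁ ≠ mk ℝ v₂ hv₂ :=
    mk_ne_mk_of_smul_eq hv₁ hv₂ h₁ h₂ fun h => hl.ne (congrArg abs h.symm)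
  rcases hg.eq_or_eq_of_smul_eq h12 ((smul_mk_eq_self_iff hv₁).2 ⟨l, h₁⟩)
    ((smul_mk_eq_self_iff hv₂).2 ⟨l⁻¹, h₂⟩) hp with rfl | rfl
  · exact ⟨g, Or.inl rfl, _, fun x hx => tendsto_pow_smul_of_smul_eq hv₁ hv₂ h₁ h₂ hl hx⟩
  · refine ⟨g⁻¹, Or.inr rfl, _, fun x hx => tendsto_pow_smul_of_smul_eq hv₂ hv₁ ?_
      (inv_smul_eq_of_smul_eq h₁ hl0) hl hx⟩
    simpa using inv_smul_eq_of_smul_eq h₂ (inv_ne_zero hl0)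

end IsHyperbolic

lemma PurelyHyperbolic.mono {Γ N : Subgroup SL(2, ℝ)} (hΓ : PurelyHyperbolic Γ) (hNΓ : N ≤ Γ) :
    PurelyHyperbolic N :=
  fun g hg => hΓ g (hNΓ hg)

-- `sl2Act` is definitionally Mathlib's action of `SL(2, ℝ)` on `ℙ ℝ (Fin 2 → ℝ)`.
lemma limitSet_eq_closure (Γ : Subgroup SL(2, ℝ)) :
    limitSet Γ = closure {p : RP1 | ∃ g ∈ Γ, IsHyperbolic g ∧ g • p = p} :=
  rfl

lemma limitSet_mono {Γ N : Subgroup SL(2, ℝ)} (hNΓ : N ≤ Γ) : limitSet N ⊆ limitSet Γ :=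
  closure_mono fun _ ⟨g, hg, hhyp, hp⟩ => ⟨g, hNΓ hg, hhyp, hp⟩

lemma mem_limitSet_of_tendsto_pow_smul {N : Subgroup SL(2, ℝ)} (hN : PurelyHyperbolic N)
    {g n : SL(2, ℝ)} (hg : g ∈ Subgroup.normalizer (N : Set SL(2, ℝ))) (hn : n ∈ N) (hn1 : n ≠ 1)
    {x p : RP1} (hx : n • x = x) (hlim : Tendsto (fun k : ℕ => g ^ k • x) atTop (𝓝 p)) :
    p ∈ limitSet N := by
  rw [limitSet_eq_closure]
  refine mem_closure_of_tendsto hlim <| Eventually.of_forall fun k => ?_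
  have hconj : g ^ k * n * (g ^ k)⁻¹ ∈ N := (Subgroup.mem_normalizer_iff.1 (pow_mem hg k) n).1 hn
  refine ⟨_, hconj, hN _ hconj (by simpa using hn1), ?_⟩
  rw [mul_smul, mul_smul, inv_smul_smul, hx]

theorem limitSet_eq_of_le_normalizer {Γ N : Subgroup SL(2, ℝ)} (hΓ : PurelyHyperbolic Γ)
    (hNΓ : N ≤ Γ) (hΓN : Γ ≤ Subgroup.normalizer N) (hN : N ≠ ⊥) : limitSet N = limitSet Γ := by
  refine (limitSet_mono hNΓ).antisymm ?_
  rw [limitSet_eq_closure Γ]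
  refine closure_minimal ?_ isClosed_closure
  rintro p ⟨g, hgΓ, hg, hp⟩
  obtain ⟨h, hh, q, hq⟩ := hg.exists_attracting hp
  have hhN : h ∈ Subgroup.normalizer N := by
    rcases hh with rfl | rfl
    exacts [hΓN hgΓ, hΓN (inv_mem hgΓ)]
  obtain ⟨n, hn, hn1⟩ := N.bot_or_exists_ne_one.resolve_left hN
  obtain ⟨x₁, x₂, h12, hx₁, hx₂⟩ := (hΓ n (hNΓ hn) hn1).exists_fixed_pair
  by_cases hx : x₁ = q
  · exact mem_limitSet_of_tendsto_pow_smul (hΓ.mono hNΓ) hhN hn hn1 hx₂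
      (hq x₂ (hx ▸ h12.symm))
  · exact mem_limitSet_of_tendsto_pow_smul (hΓ.mono hNΓ) hhN hn hn1 hx₁ (hq x₁ hx)

lemma commute_of_inf_eq_bot {G : Type*} [Group G] {Φ Θ : Subgroup G}
    (hΦ : Θ ≤ Subgroup.normalizer (Φ : Set G)) (hΘ : Φ ≤ Subgroup.normalizer (Θ : Set G))
    (h : Φ ⊓ Θ = ⊥) {φ θ : G} (hφ : φ ∈ Φ) (hθ : θ ∈ Θ) :
    Commute φ θ := by
  rw [← commutatorElement_eq_one_iff_commute, ← Subgroup.mem_bot, ← h, Subgroup.mem_inf,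
    commutatorElement_def]
  refine ⟨?_, mul_mem ((Subgroup.mem_normalizer_iff.1 (hΘ hφ) θ).1 hθ) (inv_mem hθ)⟩
  rw [mul_assoc, mul_assoc]
  exact mul_mem hφ (by simpa [mul_assoc] using
    (Subgroup.mem_normalizer_iff.1 (hΦ hθ) φ⁻¹).1 (inv_mem hφ))

lemma commute_of_smul_eq_self {p q : RP1} (hpq : p ≠ q) {g h : SL(2, ℝ)} (hgp : g • p = p)
    (hgq : g • q = q) (hhp : h • p = p) (hhq : h • q = q) : Commute g h := by
  induction p using Projectivization.ind with | h v hv => ?_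
  induction q using Projectivization.ind with | h w hw => ?_
  obtain ⟨a, ha⟩ := (smul_mk_eq_self_iff hv).1 hgp
  obtain ⟨b, hb⟩ := (smul_mk_eq_self_iff hw).1 hgq
  obtain ⟨c, hc⟩ := (smul_mk_eq_self_iff hv).1 hhp
  obtain ⟨d, hd⟩ := (smul_mk_eq_self_iff hw).1 hhq
  refine Subtype.ext (Matrix.eq_of_mulVec_eq_of_mk_ne hpq ?_ ?_)
  · change (g * h) • v = (h * g) • v
    rw [mul_smul, mul_smul, hc, smul_comm g c, ha, smul_comm h a, hc, smul_smul, smul_smul,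
      mul_comm]
  · change (g * h) • w = (h * g) • w
    rw [mul_smul, mul_smul, hd, smul_comm g d, hb, smul_comm h b, hd, smul_smul, smul_smul,
      mul_comm]

lemma not_isNonElementary_of_preserves_pair {Γ : Subgroup SL(2, ℝ)} {p q : RP1} (hpq : p ≠ q)
    (h : ∀ g ∈ Γ, ∀ x ∈ ({p, q} : Set RP1), g • x ∈ ({p, q} : Set RP1)) :
    ¬ IsNonElementary Γ := by
  have hq : ∀ a ∈ MulAction.stabilizer Γ p, (a : SL(2, ℝ)) • q = q := fun a ha => by
    rcases h a a.2 q (by simp) with hqp | hqq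
    · have hap : (a : SL(2, ℝ)) • p = p := ha
      exact absurd (smul_left_cancel _ (hqp.trans hap.symm)) hpq.symm
    · exact hqq
  refine not_not.2 ⟨MulAction.stabilizer Γ p, ⟨?_⟩, fun a ha b hb => Subtype.ext ?_⟩
  · have hfin : (MulAction.orbit Γ p).Finite :=
      (Set.toFinite {p, q}).subset (by rintro _ ⟨g, rfl⟩; exact h g g.2 p (by simp))
    rw [MulAction.index_stabilizer]
    exact ((Set.ncard_pos hfin).2 ⟨p, MulAction.mem_orbit_self p⟩).ne'
  · exact commute_of_smul_eq_self hpq ha (hq a ha) hb (hq b hb)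

theorem inf_ne_bot_of_le_normalizer {Γ Φ Θ : Subgroup SL(2, ℝ)} (hΓ : PurelyHyperbolic Γ)
    (hNE : IsNonElementary Γ) (hΦΓ : Φ ≤ Γ) (hΘΓ : Θ ≤ Γ) (hΦ : Γ ≤ Subgroup.normalizer Φ)
    (hΘ : Γ ≤ Subgroup.normalizer Θ) (hΦ1 : Φ ≠ ⊥) (hΘ1 : Θ ≠ ⊥) : Φ ⊓ Θ ≠ ⊥ := by
  intro hbot
  obtain ⟨φ, hφ, hφ1⟩ := Φ.bot_or_exists_ne_one.resolve_left hΦ1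
  obtain ⟨θ, hθ, hθ1⟩ := Θ.bot_or_exists_ne_one.resolve_left hΘ1
  have hφ' := hΓ φ (hΦΓ hφ) hφ1
  obtain ⟨p, q, hpq, hp, hq⟩ := hφ'.exists_fixed_pair
  have hΘfix : ∀ θ' ∈ Θ, ∀ x ∈ ({p, q} : Set RP1), θ' • x = x := by
    rintro θ' hθ' x (rfl | rfl)
    all_goals refine hφ'.smul_eq_of_commute ?_ ‹_›
    all_goals exact commute_of_inf_eq_bot (hΘΓ.trans hΦ) (hΦΓ.trans hΘ) hbot hφ hθ'
  refine not_isNonElementary_of_preserves_pair hpq (fun g hg x hx => ?_) hNE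
  have hgx : θ • g • x = g • x := by
    have := hΘfix _ ((Subgroup.mem_normalizer_iff''.1 (hΘ hg) θ).1 hθ) x hx
    rwa [mul_smul, mul_smul, inv_smul_eq_iff] at this
  exact (hΓ θ (hΘΓ hθ) hθ1).eq_or_eq_of_smul_eq hpq (hΘfix θ hθ p (by simp))
    (hΘfix θ hθ q (by simp)) hgx

theorem normal_subgroups_limitSet_inter_general
    (Γ : Subgroup SL(2, ℝ))
    (hPH : PurelyHyperbolic Γ) (hNE : IsNonElementary Γ)
    (Φ Θ : Subgroup SL(2, ℝ)) (hΦΓ : Φ ≤ Γ) (hΘΓ : Θ ≤ Γ)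
    (hΦn : (Φ.subgroupOf Γ).Normal) (hΘn : (Θ.subgroupOf Γ).Normal)
    (hΦnt : Φ ≠ ⊥) (hΘnt : Θ ≠ ⊥) :
    Φ ⊓ Θ ≠ ⊥ ∧ limitSet (Φ ⊓ Θ) = limitSet Φ ∩ limitSet Θ := by
  have hΦ := (Subgroup.normal_subgroupOf_iff_le_normalizer hΦΓ).1 hΦn
  have hΘ := (Subgroup.normal_subgroupOf_iff_le_normalizer hΘΓ).1 hΘn
  have hne := inf_ne_bot_of_le_normalizer hPH hNE hΦΓ hΘΓ hΦ hΘ hΦnt hΘnt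
  refine ⟨hne, ?_⟩
  rw [limitSet_eq_of_le_normalizer hPH (inf_le_left.trans hΦΓ)
      ((le_inf hΦ hΘ).trans Subgroup.inf_normalizer_le_normalizer_inf) hne,
    limitSet_eq_of_le_normalizer hPH hΦΓ hΦ hΦnt, limitSet_eq_of_le_normalizer hPH hΘΓ hΘ hΘnt,
    Set.inter_self]

/-- **Lemma 2.2.** Let `Γ` be a non-elementary discrete purely hyperbolic subgroup of
`SL(2, ℝ)` and let `Φ` and `Θ` be nontrivial normal subgroups of `Γ`. Then `Φ ∩ Θ` is
nontrivial and `Λ(Φ ∩ Θ) = Λ(Φ) ∩ Λ(Θ)`. -/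
theorem normal_subgroups_limitSet_inter
    (Γ : Subgroup SL(2, ℝ)) (hdisc : DiscreteTopology Γ)
    (hPH : PurelyHyperbolic Γ) (hNE : IsNonElementary Γ)
    (Φ Θ : Subgroup SL(2, ℝ)) (hΦΓ : Φ ≤ Γ) (hΘΓ : Θ ≤ Γ)
    (hΦn : (Φ.subgroupOf Γ).Normal) (hΘn : (Θ.subgroupOf Γ).Normal)
    (hΦnt : Φ ≠ ⊥) (hΘnt : Θ ≠ ⊥) :
    Φ ⊓ Θ ≠ ⊥ ∧ limitSet (Φ ⊓ Θ) = limitSet Φ ∩ limitSet Θ :=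
  normal_subgroups_limitSet_inter_general Γ hPH hNE Φ Θ hΦΓ hΘΓ hΦn hΘn hΦnt hΘnt

end
end

section
/- Let γ ∈ SL(2,ℝ) be hyperbolic and let p ∈ ℝP¹ satisfy γ · p = p. Then p is a uniform conical limit point of the cyclic subgroup ⟨γ⟩ generated by γ: there exist a compact set K ⊆ ℍ and an injective sequence (γ_k) of elements of ⟨γ⟩ with ray(p) ⊆ ⋃_k γ_k · K. -/
open scoped MatrixGroups LinearAlgebra.Projectivization UpperHalfPlane Pointwise
open Matrix

noncomputable section

/-!
Conjugating by some `g ∈ SL(2, ℝ)` moves `p` to `∞` and `ray p` into the vertical ray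
`{i t : t ≥ 1}`. The conjugate `δ = g γ g⁻¹` then fixes `∞`, so it is upper triangular, and after
replacing `γ` by `γ⁻¹` (which generates the same group) hyperbolicity gives `r = δ₀₀² > 1`.
Such a `δ` acts on `ℍ` as a dilation by `r` about a real point `q`, so `δ⁻ⁿ` carries the piece
`rⁿ ≤ t ≤ rⁿ⁺¹` of the vertical ray into one fixed compact box `K`; the translates `γⁿ g⁻¹ K`
then cover `ray p`.
-/

open UpperHalfPlane Set

lemma UpperHalfPlane.isCompact_re_im_Icc {a b c d : ℝ} (hc : 0 < c) :
    IsCompact {z : ℍ | z.re ∈ Icc a b ∧ z.im ∈ Icc c d} := by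
  rw [isEmbedding_coe.isCompact_iff]
  convert isCompact_Icc.reProdIm (isCompact_Icc (a := c) (b := d)) (s := Icc a b)
  ext w
  refine ⟨fun ⟨z, hz, hzw⟩ => hzw ▸ hz, fun hw => ⟨⟨w, hc.trans_le hw.2.1⟩, hw, rfl⟩⟩

lemma projInf_rep_one_eq_zero : projInf.rep 1 = 0 := by
  obtain ⟨a, ha⟩ := (Projectivization.mk_eq_mk_iff' ℝ _ _ projInf.rep_nonzero
    (by simp : ![(1 : ℝ), 0] ≠ 0)).1 (by rw [Projectivization.mk_rep]; rfl)
  simp [← ha]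

lemma ray_projInf : ray projInf = {z : ℍ | z.re = 0 ∧ 1 ≤ z.im} := by
  rw [ray, if_pos projInf_rep_one_eq_zero]

section UpperTriangular

variable {δ : SL(2, ℝ)}

lemma apply_zero_zero_mul_apply_one_one_of_apply_one_zero_eq_zero (hc : δ 1 0 = 0) :
    δ 0 0 * δ 1 1 = 1 := by
  have hdet := δ.det_coe
  rwa [det_fin_two, hc, mul_zero, sub_zero] at hdet

lemma coe_smul_of_apply_one_zero_eq_zero (hc : δ 1 0 = 0) (z : ℍ) :
    (↑(δ • z) : ℂ) = (δ 0 0 ^ 2 : ℝ) * z + (δ 0 0 * δ 0 1 : ℝ) := by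
  have had := apply_zero_zero_mul_apply_one_one_of_apply_one_zero_eq_zero hc
  have hd : δ 1 1 = (δ 0 0)⁻¹ := eq_inv_of_mul_eq_one_right had
  have ha : (δ 0 0 : ℂ) ≠ 0 := by
    exact_mod_cast left_ne_zero_of_mul_eq_one had
  rw [coe_specialLinearGroup_apply]
  simp only [Algebra.algebraMap_self, RingHom.id_apply, hc, hd]
  push_cast
  field_simp
  ring

/-- `δ = !![a, b; 0, a⁻¹]` acts on `ℍ` as `z ↦ a² z + a b`, a dilation about its real fixed
point `q = a b / (1 - a²)`. -/
lemma exists_coe_pow_smul_eq_dilation (hc : δ 1 0 = 0) (hr : δ 0 0 ^ 2 ≠ 1) :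
    ∃ q : ℝ, ∀ (n : ℕ) (z : ℍ), (↑(δ ^ n • z) : ℂ) = q + ((δ 0 0 ^ 2) ^ n : ℝ) * (z - q) := by
  have hr' : ((1 - δ 0 0 ^ 2 : ℝ) : ℂ) ≠ 0 := by exact_mod_cast sub_ne_zero.2 hr.symm
  refine ⟨δ 0 0 * δ 0 1 / (1 - δ 0 0 ^ 2), fun n z => ?_⟩
  induction n with
  | zero => simp
  | succ n ih =>
    rw [pow_succ', mul_smul, coe_smul_of_apply_one_zero_eq_zero hc, ih]
    push_cast at hr' ⊢
    field_simp
    ring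

lemma pow_injective_of_apply_one_zero_eq_zero (hc : δ 1 0 = 0) (hr : δ 0 0 ^ 2 ≠ 1) :
    Function.Injective (δ ^ · : ℕ → SL(2, ℝ)) := by
  obtain ⟨q, hq⟩ := exists_coe_pow_smul_eq_dilation hc hr
  have ha : δ 0 0 ≠ 0 :=
    left_ne_zero_of_mul_eq_one (apply_zero_zero_mul_apply_one_one_of_apply_one_zero_eq_zero hc)
  have hI : (I : ℂ) - q ≠ 0 := fun h => by simpa using congrArg Complex.im h
  intro m n hmn
  have h := congrArg (fun g => (↑(g • I) : ℂ)) hmn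
  simp only [hq, add_right_inj, mul_left_inj' hI, Complex.ofReal_inj] at h
  exact pow_right_injective₀ (by positivity) hr h

lemma IsHyperbolic.conj {γ : SL(2, ℝ)} (hγ : IsHyperbolic γ) (g : SL(2, ℝ)) :
    IsHyperbolic (g * γ * g⁻¹) := by
  rwa [_root_.IsHyperbolic, Matrix.SpecialLinearGroup.coe_mul, trace_mul_comm,
    ← Matrix.SpecialLinearGroup.coe_mul, inv_mul_cancel_left]

lemma IsHyperbolic.sq_apply_zero_zero_ne_one (hδ : IsHyperbolic δ)
    (hc : δ 1 0 = 0) : δ 0 0 ^ 2 ≠ 1 := by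
  have had := apply_zero_zero_mul_apply_one_one_of_apply_one_zero_eq_zero hc
  replace hδ : 2 < |δ 0 0 + δ 1 1| := by rwa [_root_.IsHyperbolic, trace_fin_two] at hδ
  intro h
  have htr : (δ 0 0 + δ 1 1) ^ 2 = 4 := by nlinarith
  nlinarith [sq_abs (δ 0 0 + δ 1 1)]

lemma inv_apply_one_zero_eq_zero (hc : δ 1 0 = 0) : δ⁻¹ 1 0 = 0 := by
  rw [Matrix.SpecialLinearGroup.SL2_inv_expl]
  exact neg_eq_zero.2 hc

lemma one_lt_sq_inv_apply_zero_zero (hc : δ 1 0 = 0) (hr : δ 0 0 ^ 2 < 1) :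
    1 < δ⁻¹ 0 0 ^ 2 := by
  have had := apply_zero_zero_mul_apply_one_one_of_apply_one_zero_eq_zero hc
  have hinv : δ⁻¹ 0 0 = δ 1 1 := by rw [Matrix.SpecialLinearGroup.SL2_inv_expl]; rfl
  rw [hinv]
  nlinarith [sq_nonneg (δ 1 1), sq_nonneg (δ 0 0)]

lemma ray_projInf_subset_iUnion_pow_smul (hc : δ 1 0 = 0) (hr : 1 < δ 0 0 ^ 2) :
    ∃ K : Set ℍ, IsCompact K ∧ ray projInf ⊆ ⋃ n : ℕ, δ ^ n • K := by
  obtain ⟨q, hq⟩ := exists_coe_pow_smul_eq_dilation hc hr.ne'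
  set r := δ 0 0 ^ 2
  refine ⟨{w : ℍ | w.re ∈ Icc (q - |q|) (q + |q|) ∧ w.im ∈ Icc 1 r},
    isCompact_re_im_Icc one_pos, ?_⟩
  rw [ray_projInf]
  rintro z ⟨hre, him⟩
  obtain ⟨n, hn, hn'⟩ := exists_nat_pow_near him hr
  have hrn : 1 ≤ r ^ n := one_le_pow₀ hr.le
  refine mem_iUnion.2 ⟨n, mem_smul_set_iff_inv_smul_mem.2 ?_⟩
  -- `(δ ^ n)⁻¹` contracts `ℍ` towards `q` by the factor `r ^ n`, so the piece
  -- `r ^ n ≤ im ≤ r ^ (n + 1)` of the vertical ray lands in the box `K`.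
  have hw : (↑((δ ^ n)⁻¹ • z) : ℂ) = q + ((r ^ n)⁻¹ : ℝ) * (z - q) := by
    have h := hq n ((δ ^ n)⁻¹ • z)
    rw [smul_inv_smul] at h
    have : ((r ^ n : ℝ) : ℂ) ≠ 0 := by exact_mod_cast (zero_lt_one.trans_le hrn).ne'
    push_cast at *
    field_simp
    linear_combination -h
  have hw_re : ((δ ^ n)⁻¹ • z).re = q - q / r ^ n := by
    rw [← coe_re, hw]
    simp only [Complex.add_re, Complex.ofReal_re, Complex.re_ofReal_mul, Complex.sub_re, coe_re,
      hre]
    ring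
  have hw_im : ((δ ^ n)⁻¹ • z).im = z.im / r ^ n := by
    rw [← coe_im, hw]
    simp only [Complex.add_im, Complex.ofReal_im, Complex.im_ofReal_mul, Complex.sub_im, coe_im]
    ring
  have hq_div : |q / r ^ n| ≤ |q| := by
    rw [abs_div, abs_of_pos (zero_lt_one.trans_le hrn)]
    exact div_le_self (abs_nonneg q) hrn
  refine ⟨?_, ?_⟩
  · rw [hw_re, mem_Icc]
    constructor <;> linarith [abs_le.1 hq_div]
  · rw [hw_im, mem_Icc, le_div_iff₀ (by positivity), div_le_iff₀ (by positivity), one_mul,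
      ← pow_succ']
    exact ⟨hn, hn'.le⟩

end UpperTriangular

lemma sl2Act_mul (g h : SL(2, ℝ)) (p : RP1) : sl2Act (g * h) p = sl2Act g (sl2Act h p) := by
  induction p using Projectivization.ind with
  | h v hv => simp [sl2Act, Projectivization.map_mk]

lemma sl2Act_one (p : RP1) : sl2Act 1 p = p := by
  induction p using Projectivization.ind with
  | h v hv => simp [sl2Act, Projectivization.map_mk]

lemma apply_one_zero_eq_zero_of_sl2Act_projInf {δ : SL(2, ℝ)} (h : sl2Act δ projInf = projInf) :
    δ 1 0 = 0 := by
  rw [projInf, sl2Act, Projectivization.map_mk, Projectivization.mk_eq_mk_iff'] at h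
  obtain ⟨a, ha⟩ := h
  simpa [Matrix.SpecialLinearGroup.toLin'_apply, mulVec, vecHead] using (congrFun ha 1).symm

lemma eq_projInf_of_rep_one_eq_zero {p : RP1} (hp : p.rep 1 = 0) : p = projInf := by
  rw [← p.mk_rep, projInf, Projectivization.mk_eq_mk_iff']
  exact ⟨p.rep 0, by ext i; fin_cases i <;> simp [hp]⟩

def sendToInf (x : ℝ) : SL(2, ℝ) := ⟨!![0, -1; 1, -x], by simp [det_fin_two_of]⟩

lemma sl2Act_sendToInf {p : RP1} (hp : p.rep 1 ≠ 0) :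
    sl2Act (sendToInf (p.rep 0 / p.rep 1)) p = projInf := by
  conv_lhs => arg 2; rw [← p.mk_rep]
  rw [projInf, sl2Act, Projectivization.map_mk, Projectivization.mk_eq_mk_iff']
  refine ⟨-p.rep 1, ?_⟩
  ext i
  simp only [LinearEquiv.coe_coe, Matrix.SpecialLinearGroup.toLin'_apply]
  fin_cases i <;> simp [sendToInf, mulVec, dotProduct, Fin.sum_univ_two]
  field_simp
  ring

lemma coe_sendToInf_smul (x : ℝ) (z : ℍ) : (↑(sendToInf x • z) : ℂ) = -1 / (z - x) := by
  rw [coe_specialLinearGroup_apply]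
  simp [sendToInf, sub_eq_add_neg]

lemma mapsTo_sendToInf_ray {p : RP1} (hp : p.rep 1 ≠ 0) :
    MapsTo (sendToInf (p.rep 0 / p.rep 1) • ·) (ray p) (ray projInf) := by
  rw [ray, if_neg hp, ray_projInf]
  rintro z ⟨hre, him⟩
  have hz : (z : ℂ) - ↑(p.rep 0 / p.rep 1) = z.im * Complex.I :=
    Complex.ext (by simp [hre]) (by simp)
  have hval : (↑(sendToInf (p.rep 0 / p.rep 1) • z) : ℂ) = (z.im⁻¹ : ℝ) * Complex.I := by
    have : (z.im : ℂ) ≠ 0 := by exact_mod_cast z.im_pos.ne'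
    rw [coe_sendToInf_smul, hz, Complex.ofReal_inv]
    field_simp
    simp
  simp only [mem_ofPred_eq, ← coe_re, ← coe_im, hval, Complex.re_ofReal_mul, Complex.I_re,
    Complex.im_ofReal_mul, Complex.I_im]
  exact ⟨mul_zero _, by simpa using one_le_inv₀ z.im_pos |>.2 him⟩

lemma exists_sl2Act_eq_projInf_mapsTo_ray (p : RP1) :
    ∃ g : SL(2, ℝ), sl2Act g p = projInf ∧ MapsTo (g • ·) (ray p) (ray projInf) := by
  by_cases hp : p.rep 1 = 0
  · obtain rfl := eq_projInf_of_rep_one_eq_zero hp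
    exact ⟨1, sl2Act_one _, fun z hz => by simpa using hz⟩
  · exact ⟨_, sl2Act_sendToInf hp, mapsTo_sendToInf_ray hp⟩

lemma isUniformConicalLimitPoint_zpowers_of_conj {γ g : SL(2, ℝ)} {p : RP1}
    (hc : (g * γ * g⁻¹) 1 0 = 0) (hr : 1 < (g * γ * g⁻¹) 0 0 ^ 2)
    (hg : MapsTo (g • ·) (ray p) (ray projInf)) :
    IsUniformConicalLimitPoint (Subgroup.zpowers γ) p := by
  obtain ⟨K, hK, hcover⟩ := ray_projInf_subset_iUnion_pow_smul hc hr
  refine ⟨g⁻¹ • K, hK.smul _, (γ ^ ·), fun m n hmn => ?_, fun n => ⟨n, zpow_natCast γ n⟩, ?_⟩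
  · refine pow_injective_of_apply_one_zero_eq_zero hc hr.ne' ?_
    simp only [conj_pow, hmn]
  · intro z hz
    obtain ⟨n, hn⟩ := mem_iUnion.1 (hcover (hg hz))
    refine mem_iUnion.2 ⟨n, ?_⟩
    rwa [conj_pow, mul_smul, mul_smul, smul_mem_smul_set_iff] at hn

/-- The fixed points of a hyperbolic element `γ` of `SL(2, ℝ)` are uniform conical limit
points of the cyclic group generated by `γ`. -/
theorem fixed_point_isUniformConicalLimitPoint_zpowers
    (γ : SL(2, ℝ)) (hγ : IsHyperbolic γ) (p : RP1) (hγp : sl2Act γ p = p) :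
    IsUniformConicalLimitPoint (Subgroup.zpowers γ) p := by
  obtain ⟨g, hgp, hg⟩ := exists_sl2Act_eq_projInf_mapsTo_ray p
  have hfix : sl2Act (g * γ * g⁻¹) projInf = projInf := by
    rw [← hgp, sl2Act_mul, sl2Act_mul, ← sl2Act_mul g⁻¹, inv_mul_cancel, sl2Act_one, hγp]
  have hc := apply_one_zero_eq_zero_of_sl2Act_projInf hfix
  rcases ((hγ.conj g).sq_apply_zero_zero_ne_one hc).lt_or_gt with hr | hr
  · have hconj : g * γ⁻¹ * g⁻¹ = (g * γ * g⁻¹)⁻¹ := by group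
    rw [← Subgroup.zpowers_inv]
    refine isUniformConicalLimitPoint_zpowers_of_conj ?_ ?_ hg <;> rw [hconj]
    exacts [inv_apply_one_zero_eq_zero hc, one_lt_sq_inv_apply_zero_zero hc hr]
  · exact isUniformConicalLimitPoint_zpowers_of_conj hc hr hg
end
end

section
/- Let Γ be a discrete purely hyperbolic subgroup of SL(2,ℝ) and let a, b be non-identity elements of Γ with a·b = b·a. Then there exist an element c ∈ Γ and integers m, n such that a = c^m and b = c^n. -/
open scoped MatrixGroups LinearAlgebra.Projectivization UpperHalfPlane Pointwise
open Matrix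

noncomputable section

/-! Let `l ≠ m` be the eigenvalues of the hyperbolic element `a`, and `E`, `E'` the spectral
projections of `a` onto its two eigenlines. The elements of `SL(2, ℝ)` commuting with `a` are
exactly the matrices `x • E + x⁻¹ • E'` with `x ∈ ℝˣ`, and `x ↦ x • E + x⁻¹ • E'` is a continuous
injective homomorphism `ℝˣ → SL(2, ℝ)`. The preimage `H` of `Γ` is therefore a discrete subgroup
of `ℝˣ`, and `-1 ∉ H` because `-1` has trace `-2`. So `log |·|` embeds `H` into a discrete
subgroup of `ℝ`, which is cyclic; hence `H` is cyclic, and both `a` and `b` lie in its image. -/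

namespace Matrix

variable {K : Type*} [Field K]

theorem exists_eq_smul_one_add_smul_of_commute {A z : Matrix (Fin 2) (Fin 2) K}
    (hA : A.trace ^ 2 - 4 * A.det ≠ 0) (hz : Commute z A) : ∃ α β : K, z = α • 1 + β • A := by
  have e00 := congrFun (congrFun hz.eq 0) 0
  have e01 := congrFun (congrFun hz.eq 0) 1
  have e10 := congrFun (congrFun hz.eq 1) 0
  simp only [mul_apply, Fin.sum_univ_two] at e00 e01 e10
  set D := A.trace ^ 2 - 4 * A.det
  -- `2 tr (z A) - tr A tr z = β D` when `z = α • 1 + β • A`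
  set N := 2 * (z * A).trace - A.trace * z.trace
  have h01 : z 0 1 * D = N * A 0 1 := by
    simp only [D, N, trace_fin_two, det_fin_two, mul_apply, Fin.sum_univ_two]
    linear_combination (-(A 0 0 - A 1 1)) * e01 + 2 * A 0 1 * e00
  have h10 : z 1 0 * D = N * A 1 0 := by
    simp only [D, N, trace_fin_two, det_fin_two, mul_apply, Fin.sum_univ_two]
    linear_combination (A 0 0 - A 1 1) * e10 - 2 * A 1 0 * e00
  have h11 : (z 1 1 - z 0 0) * D = N * (A 1 1 - A 0 0) := by
    simp only [D, N, trace_fin_two, det_fin_two, mul_apply, Fin.sum_univ_two]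
    linear_combination -4 * A 1 0 * e01 - 2 * (A 0 0 - A 1 1) * e00
  refine ⟨z 0 0 - N / D * A 0 0, N / D, ?_⟩
  ext i j
  fin_cases i <;> fin_cases j <;>
    simp only [Fin.zero_eta, Fin.mk_one, Fin.isValue, add_apply, smul_apply, smul_eq_mul, ne_eq,
      one_apply_eq, one_apply_ne, zero_ne_one, one_ne_zero, not_false_eq_true, mul_one, mul_zero,
      zero_add, sub_add_cancel]
  · rw [div_mul_eq_mul_div, eq_div_iff hA, h01]
  · rw [div_mul_eq_mul_div, eq_div_iff hA, h10]
  · field_simp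
    linear_combination h11

section Spectral

variable {A : Matrix (Fin 2) (Fin 2) K} {l m : K}

/-- For eigenvalues `l ≠ m` of `A`, the projection onto the `l`-eigenline along the
`m`-eigenline. -/
def spectralProj (A : Matrix (Fin 2) (Fin 2) K) (l m : K) : Matrix (Fin 2) (Fin 2) K :=
  (l - m)⁻¹ • (A - m • 1)

theorem sub_smul_one_mul_sub_smul_one_eq_zero (htr : l + m = A.trace) (hdet : l * m = A.det) :
    (A - l • 1) * (A - m • 1) = 0 := by
  rw [trace_fin_two] at htr
  rw [det_fin_two] at hdet
  ext i j
  fin_cases i <;> fin_cases j <;>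
    simp only [Fin.zero_eta, Fin.mk_one, Fin.isValue, mul_apply, sub_apply, smul_apply, one_apply,
      smul_eq_mul, mul_ite, mul_one, mul_zero, Fin.sum_univ_two, ↓reduceIte, zero_ne_one,
      one_ne_zero, sub_zero, zero_apply]
  · linear_combination (-A 0 0) * htr + hdet
  · linear_combination (-A 0 1) * htr
  · linear_combination (-A 1 0) * htr
  · linear_combination (-A 1 1) * htr + hdet

theorem spectralProj_add_spectralProj (hlm : l ≠ m) :
    spectralProj A l m + spectralProj A m l = 1 := by
  rw [spectralProj, spectralProj, ← neg_sub l m, inv_neg, neg_smul, ← sub_eq_add_neg, ← smul_sub,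
    sub_sub_sub_cancel_left, ← sub_smul, inv_smul_smul₀ (sub_ne_zero.mpr hlm)]

theorem spectralProj_mul_spectralProj_swap (htr : l + m = A.trace) (hdet : l * m = A.det) :
    spectralProj A l m * spectralProj A m l = 0 := by
  rw [spectralProj, spectralProj, smul_mul_smul_comm,
    sub_smul_one_mul_sub_smul_one_eq_zero (by rwa [add_comm]) (by rwa [mul_comm]), smul_zero]

theorem spectralProj_mul_self (hlm : l ≠ m) (htr : l + m = A.trace) (hdet : l * m = A.det) :
    spectralProj A l m * spectralProj A l m = spectralProj A l m := by
  calc spectralProj A l m * spectralProj A l m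
      = spectralProj A l m * (spectralProj A l m + spectralProj A m l) := by
        rw [mul_add, spectralProj_mul_spectralProj_swap htr hdet, add_zero]
    _ = spectralProj A l m := by rw [spectralProj_add_spectralProj hlm, mul_one]

theorem trace_spectralProj (hlm : l ≠ m) (htr : l + m = A.trace) :
    (spectralProj A l m).trace = 1 := by
  rw [spectralProj, trace_smul, trace_sub, trace_smul, trace_one, ← htr, Fintype.card_fin,
    smul_eq_mul, smul_eq_mul]
  field_simp [sub_ne_zero.mpr hlm]
  ring

/-- The matrix acting as `x` on the `l`-eigenline of `A` and as `y` on its `m`-eigenline. -/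
def spectralMatrix (A : Matrix (Fin 2) (Fin 2) K) (l m x y : K) : Matrix (Fin 2) (Fin 2) K :=
  x • spectralProj A l m + y • spectralProj A m l

theorem spectralMatrix_mul_spectralMatrix (hlm : l ≠ m) (htr : l + m = A.trace)
    (hdet : l * m = A.det) (x y x' y' : K) :
    spectralMatrix A l m x y * spectralMatrix A l m x' y' =
      spectralMatrix A l m (x * x') (y * y') := by
  have htr' : m + l = A.trace := by rwa [add_comm]
  have hdet' : m * l = A.det := by rwa [mul_comm]
  simp only [spectralMatrix, add_mul, mul_add, smul_mul_smul, spectralProj_mul_self hlm htr hdet,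
    spectralProj_mul_self hlm.symm htr' hdet', spectralProj_mul_spectralProj_swap htr hdet,
    spectralProj_mul_spectralProj_swap htr' hdet', smul_zero, add_zero, zero_add]

theorem spectralMatrix_one_one (hlm : l ≠ m) : spectralMatrix A l m 1 1 = 1 := by
  rw [spectralMatrix, one_smul, one_smul, spectralProj_add_spectralProj hlm]

theorem trace_spectralMatrix (hlm : l ≠ m) (htr : l + m = A.trace) (x y : K) :
    (spectralMatrix A l m x y).trace = x + y := by
  rw [spectralMatrix, trace_add, trace_smul, trace_smul, trace_spectralProj hlm htr,
    trace_spectralProj hlm.symm (by rwa [add_comm]), smul_eq_mul, smul_eq_mul, mul_one, mul_one]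

theorem det_spectralMatrix (hlm : l ≠ m) (htr : l + m = A.trace) (hdet : l * m = A.det)
    (x y : K) : (spectralMatrix A l m x y).det = x * y := by
  rw [trace_fin_two] at htr
  rw [det_fin_two] at hdet
  have : l - m ≠ 0 := sub_ne_zero.mpr hlm
  simp only [spectralMatrix, spectralProj, det_fin_two, add_apply, smul_apply, sub_apply,
    one_apply_eq, one_apply_ne, smul_eq_mul, mul_one, mul_zero, sub_zero, ne_eq, zero_ne_one,
    one_ne_zero, not_false_eq_true]
  field_simp
  linear_combination
    (l - m) ^ 2 * (-(x - y) ^ 2) * hdet + (l - m) ^ 2 * (l * y - m * x) * (y - x) * htr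

theorem spectralMatrix_self (hlm : l ≠ m) : spectralMatrix A l m l m = A := by
  have : l - m ≠ 0 := sub_ne_zero.mpr hlm
  rw [spectralMatrix, spectralProj, spectralProj, ← neg_sub l m, inv_neg]
  match_scalars <;> field_simp <;> ring

theorem smul_one_add_smul_eq_spectralMatrix (hlm : l ≠ m) (α β : K) :
    α • 1 + β • A = spectralMatrix A l m (α + β * l) (α + β * m) := by
  calc α • 1 + β • A
      = α • (spectralProj A l m + spectralProj A m l) + β • spectralMatrix A l m l m := by
        rw [spectralProj_add_spectralProj hlm, spectralMatrix_self hlm]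
    _ = spectralMatrix A l m (α + β * l) (α + β * m) := by
        rw [spectralMatrix, spectralMatrix]
        module

def spectralHom (hlm : l ≠ m) (htr : l + m = A.trace) (hdet : l * m = A.det) :
    Kˣ →* SL(2, K) where
  toFun u := (⟨spectralMatrix A l m u (u : K)⁻¹, by
    rw [det_spectralMatrix hlm htr hdet, mul_inv_cancel₀ u.ne_zero]⟩ : SL(2, K))
  map_one' := Subtype.ext (by simpa using spectralMatrix_one_one hlm)
  map_mul' u v := Subtype.ext (by
    change spectralMatrix A l m _ _ = spectralMatrix A l m _ _ * spectralMatrix A l m _ _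
    rw [spectralMatrix_mul_spectralMatrix hlm htr hdet, Units.val_mul, mul_inv])

variable (hlm : l ≠ m) (htr : l + m = A.trace) (hdet : l * m = A.det)

theorem coe_spectralHom (u : Kˣ) :
    (spectralHom hlm htr hdet u : Matrix (Fin 2) (Fin 2) K) = spectralMatrix A l m u (u : K)⁻¹ :=
  rfl

theorem trace_spectralHom (u : Kˣ) :
    (spectralHom hlm htr hdet u : Matrix (Fin 2) (Fin 2) K).trace = u + (u : K)⁻¹ := by
  rw [coe_spectralHom, trace_spectralMatrix hlm htr]

theorem spectralHom_injective : Function.Injective (spectralHom hlm htr hdet) := by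
  refine (injective_iff_map_eq_one _).mpr fun u hu => ?_
  have h := trace_spectralHom hlm htr hdet u
  rw [hu, SpecialLinearGroup.coe_one, trace_one, Fintype.card_fin] at h
  have : ((u : K) - 1) ^ 2 = 0 := by
    calc ((u : K) - 1) ^ 2 = u * (u + (u : K)⁻¹ - 2) := by field_simp; ring
      _ = 0 := by rw [← h]; push_cast; ring
  exact Units.val_eq_one.mp (sub_eq_zero.mp (pow_eq_zero_iff two_ne_zero |>.mp this))

theorem exists_spectralHom_eq_of_commute {z : SL(2, K)}
    (hz : Commute (z : Matrix (Fin 2) (Fin 2) K) A) : ∃ u, spectralHom hlm htr hdet u = z := by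
  have hdisc : A.trace ^ 2 - 4 * A.det = (l - m) ^ 2 := by rw [← htr, ← hdet]; ring
  obtain ⟨α, β, hαβ⟩ := exists_eq_smul_one_add_smul_of_commute
    (hdisc ▸ pow_ne_zero 2 (sub_ne_zero.mpr hlm)) hz
  rw [smul_one_add_smul_eq_spectralMatrix hlm] at hαβ
  have hdet_z : (α + β * l) * (α + β * m) = 1 := by
    rw [← det_spectralMatrix hlm htr hdet, ← hαβ, z.2]
  refine ⟨Units.mk0 _ (left_ne_zero_of_mul_eq_one hdet_z), Subtype.ext ?_⟩
  rw [coe_spectralHom, hαβ, Units.val_mk0, eq_inv_of_mul_eq_one_right hdet_z]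

end Spectral

theorem exists_eigenvalues_of_four_mul_det_lt {A : Matrix (Fin 2) (Fin 2) ℝ}
    (h : 4 * A.det < A.trace ^ 2) : ∃ l m : ℝ, l ≠ m ∧ l + m = A.trace ∧ l * m = A.det := by
  obtain ⟨d, hd, hd2⟩ : ∃ d : ℝ, 0 < d ∧ d ^ 2 = A.trace ^ 2 - 4 * A.det :=
    ⟨_, Real.sqrt_pos.mpr (by linarith), Real.sq_sqrt (by linarith)⟩
  exact ⟨(A.trace + d) / 2, (A.trace - d) / 2, by intro h; linarith, by ring,
    by linear_combination -hd2 / 4⟩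

theorem continuous_spectralHom {A : Matrix (Fin 2) (Fin 2) ℝ} {l m : ℝ} (hlm : l ≠ m)
    (htr : l + m = A.trace) (hdet : l * m = A.det) : Continuous (spectralHom hlm htr hdet) := by
  have : Continuous fun u : ℝˣ => spectralMatrix A l m u (u : ℝ)⁻¹ := by
    unfold spectralMatrix
    fun_prop (disch := exact fun u => u.ne_zero)
  exact this.subtype_mk _

end Matrix

theorem IsHyperbolic.exists_eigenvalues {g : SL(2, ℝ)} (hg : IsHyperbolic g) :
    ∃ l m : ℝ, l ≠ m ∧ l + m = (g : Matrix (Fin 2) (Fin 2) ℝ).trace ∧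
      l * m = (g : Matrix (Fin 2) (Fin 2) ℝ).det := by
  refine exists_eigenvalues_of_four_mul_det_lt ?_
  have htr : 2 < |(g : Matrix (Fin 2) (Fin 2) ℝ).trace| := hg
  rw [g.2, sq, ← abs_mul_abs_self]
  nlinarith

namespace Subgroup

def logAbs (H : Subgroup ℝˣ) : AddSubgroup ℝ where
  carrier := {s | ∃ u ∈ H, Real.log |(u : ℝ)| = s}
  add_mem' := by
    rintro _ _ ⟨u, hu, rfl⟩ ⟨v, hv, rfl⟩
    exact ⟨u * v, H.mul_mem hu hv, by
      rw [Units.val_mul, abs_mul, Real.log_mul (by simp) (by simp)]⟩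
  zero_mem' := ⟨1, H.one_mem, by simp⟩
  neg_mem' := by
    rintro _ ⟨u, hu, rfl⟩
    exact ⟨u⁻¹, H.inv_mem hu, by simp [Real.log_inv]⟩

theorem discreteTopology_logAbs (H : Subgroup ℝˣ) [DiscreteTopology H] :
    DiscreteTopology H.logAbs := by
  -- `s = log |u| ↦ exp (2 s) = u²` maps `H.logAbs` continuously and injectively into `H`
  have hmem : ∀ s : H.logAbs,
      Units.mk0 (Real.exp (2 * s)) (Real.exp_pos _).ne' ∈ H := by
    rintro ⟨_, u, hu, rfl⟩
    convert H.pow_mem hu 2 using 1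
    ext
    simp only [Units.val_mk0, Units.val_pow_eq_pow_val]
    rw [two_mul, Real.exp_add, Real.exp_log (abs_pos.mpr u.ne_zero), abs_mul_abs_self, sq]
  refine DiscreteTopology.of_continuous_injective (f := fun s => (⟨_, hmem s⟩ : H)) ?_ ?_
  · refine Continuous.subtype_mk (Units.continuous_iff.mpr ⟨?_, ?_⟩) _ <;>
      simp only [Function.comp_def, Units.val_mk0, Units.val_inv_eq_inv_val] <;>
      fun_prop (disch := exact fun s => (Real.exp_pos _).ne')
  · intro s t hst
    have := congrArg (fun u : H => ((u : ℝˣ) : ℝ)) hst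
    simp only [Units.val_mk0, Real.exp_eq_exp] at this
    exact Subtype.ext (mul_left_cancel₀ two_ne_zero this)

theorem eq_one_of_abs_eq_one {H : Subgroup ℝˣ} (hH : -1 ∉ H) {u : ℝˣ} (hu : u ∈ H)
    (h : |(u : ℝ)| = 1) : u = 1 := by
  rcases (abs_eq zero_le_one).mp h with h | h
  · exact Units.val_eq_one.mp h
  · exact absurd (show u = -1 from Units.ext (by simpa using h)) (fun h => hH (h ▸ hu))

theorem exists_zpowers_eq_of_neg_one_notMem (H : Subgroup ℝˣ) [DiscreteTopology H]
    (hH : -1 ∉ H) : ∃ g, zpowers g = H := by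
  have := AddSubgroup.discrete_iff_addCyclic.mpr H.discreteTopology_logAbs
  obtain ⟨⟨_, g, hg, rfl⟩, hgen⟩ := IsAddCyclic.exists_generator (α := H.logAbs)
  refine ⟨g, le_antisymm (zpowers_le.mpr hg) fun u hu => ?_⟩
  obtain ⟨k, hk⟩ := hgen ⟨_, u, hu, rfl⟩
  have habs : |((u * (g ^ k)⁻¹ : ℝˣ) : ℝ)| = 1 := by
    refine Real.eq_one_of_pos_of_log_eq_zero (abs_pos.mpr (Units.ne_zero _)) ?_
    have := congrArg Subtype.val hk
    simp only [AddSubgroup.coe_zsmul, zsmul_eq_mul] at this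
    rw [Units.val_mul, Units.val_inv_eq_inv_val, Units.val_zpow_eq_zpow_val, abs_mul, abs_inv,
      abs_zpow, Real.log_mul (by simp)
      (inv_ne_zero (zpow_ne_zero k (abs_ne_zero.mpr g.ne_zero))), Real.log_inv, Real.log_zpow, this,
      add_neg_cancel]
  have := eq_one_of_abs_eq_one hH (H.mul_mem hu (H.inv_mem (H.zpow_mem hg k))) habs
  exact mul_inv_eq_one.mp this ▸ zpow_mem_zpowers g k

end Subgroup

theorem commute_exists_common_power_general
    (Γ : Subgroup SL(2, ℝ)) (hdisc : DiscreteTopology Γ) (hPH : PurelyHyperbolic Γ)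
    (a b : SL(2, ℝ)) (ha : a ∈ Γ) (hb : b ∈ Γ) (ha1 : a ≠ 1)
    (hab : a * b = b * a) :
    ∃ c ∈ Γ, ∃ m n : ℤ, a = c ^ m ∧ b = c ^ n := by
  obtain ⟨l₁, l₂, hl, htr, hdet⟩ := (hPH a ha ha1).exists_eigenvalues
  set Φ := spectralHom hl htr hdet
  set H := Γ.comap Φ
  have : DiscreteTopology H := DiscreteTopology.of_continuous_injective
    (f := Φ.subgroupComap Γ)
    (((continuous_spectralHom hl htr hdet).comp continuous_subtype_val).subtype_mk _)
    fun u v h => Subtype.ext (spectralHom_injective hl htr hdet (congrArg Subtype.val h))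
  have hneg : (-1 : ℝˣ) ∉ H := by
    intro h
    have hΦ : Φ (-1) ≠ 1 := by
      rw [← map_one Φ]
      exact (spectralHom_injective hl htr hdet).ne (by simp)
    have := hPH _ h hΦ
    rw [_root_.IsHyperbolic, trace_spectralHom] at this
    norm_num at this
  obtain ⟨g, hg⟩ := H.exists_zpowers_eq_of_neg_one_notMem hneg
  have hpow : ∀ z ∈ Γ, Commute (z : Matrix (Fin 2) (Fin 2) ℝ) a → ∃ k : ℤ, z = Φ g ^ k := by
    intro z hz hza
    obtain ⟨u, rfl⟩ := exists_spectralHom_eq_of_commute hl htr hdet hza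
    obtain ⟨k, rfl⟩ := Subgroup.mem_zpowers_iff.mp (hg ▸ hz : u ∈ Subgroup.zpowers g)
    exact ⟨k, map_zpow Φ g k⟩
  obtain ⟨i, hi⟩ := hpow a ha (Commute.refl _)
  obtain ⟨j, hj⟩ := hpow b hb (congrArg Subtype.val hab).symm
  exact ⟨Φ g, show g ∈ H from hg ▸ Subgroup.mem_zpowers g, i, j, hi, hj⟩

/-- Two commuting non-identity elements of a discrete purely hyperbolic subgroup of
`SL(2, ℝ)` are integer powers of a common element of the subgroup. -/
theorem commute_exists_common_power
    (Γ : Subgroup SL(2, ℝ)) (hdisc : DiscreteTopology Γ) (hPH : PurelyHyperbolic Γ)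
    (a b : SL(2, ℝ)) (ha : a ∈ Γ) (hb : b ∈ Γ) (ha1 : a ≠ 1) (hb1 : b ≠ 1)
    (hab : a * b = b * a) :
    ∃ c ∈ Γ, ∃ m n : ℤ, a = c ^ m ∧ b = c ^ n :=
  commute_exists_common_power_general Γ hdisc hPH a b ha hb ha1 hab

end
end
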